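/- arXiv:2408.11937 — 3 statements merged into one kernel-verified Lean document; each statement's English description precedes it below -/
import Mathlib

section
/- Let f : ℝⁿ → ℝ be convex with 0-sublevel set F = {x : f(x) ≤ 0} nonempty, let y ∈ ℝⁿ with f(y) ≤ ε for some ε ≥ 0, and suppose there exists c ∈ ∂f(p) at the projection p = proj_F(y) with c collinear with y − p and ‖c‖ ≥ G₀ > 0. Then the distance from y to F satisfies ‖y − p‖ ≤ ε/G₀. -/
open scoped RealInnerProductSpace

/-- Distance to the feasible set of a convex inequality is bounded by the
constraint violation divided by a lower bound on the subgradient norm. -/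
theorem dist_to_sublevel_le_violation_div_gradbound
    {n : ℕ} (f : EuclideanSpace ℝ (Fin n) → ℝ) (hf : ConvexOn ℝ Set.univ f)
    (F : Set (EuclideanSpace ℝ (Fin n))) (hFdef : F = {x | f x ≤ 0})
    (hFne : F.Nonempty)
    (y p c : EuclideanSpace ℝ (Fin n)) (ε G₀ : ℝ)
    (hε : 0 ≤ ε) (hfy : f y ≤ ε)
    (hp : p ∈ F ∧ ∀ w ∈ F, dist y p ≤ dist y w)
    (hc : ∀ w, f p + ⟪c, w - p⟫ ≤ f w)
    (hcollinear : ∃ t : ℝ, 0 ≤ t ∧ y - p = t • c)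
    (hG₀ : 0 < G₀) (hcnorm : G₀ ≤ ‖c‖) :
    ‖y - p‖ ≤ ε / G₀ := by
  by_cases hyF : f y ≤ 0
  · -- y is itself feasible, so p = y
    have hyF' : y ∈ F := by rw [hFdef]; exact hyF
    have h0 : dist y p ≤ 0 := by simpa using hp.2 y hyF'
    have : y = p := by
      have := le_antisymm h0 dist_nonneg
      exact dist_eq_zero.mp this
    simp [this]
    positivity
  · push_neg at hyF
    have hfp_le : f p ≤ 0 := by have := hp.1; rwa [hFdef] at this
    have hyp_ne : y ≠ p := by
      intro h; rw [h] at hyF; linarith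
    -- f p = 0
    have hfp : f p = 0 := by
      by_contra h
      have hfp_lt : f p < 0 := lt_of_le_of_ne hfp_le h
      have hdiff : 0 < f y - f p := by linarith
      set s : ℝ := (-f p) / (f y - f p) with hs
      have hs_pos : 0 < s := by
        apply div_pos (by linarith) hdiff
      have hs_lt : s < 1 := by
        rw [hs, div_lt_one hdiff]; linarith
      have hsum : (1 - s) + s = 1 := by ring
      set w := (1 - s) • p + s • y with hw
      have hfw : f w ≤ 0 := by
        have := hf.2 (Set.mem_univ p) (Set.mem_univ y)
          (by linarith : (0:ℝ) ≤ 1 - s) hs_pos.le hsum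
        have hval : (1 - s) * f p + s * f y = 0 := by
          rw [hs]; field_simp; ring
        simp only [smul_eq_mul] at this
        rw [hw]
        linarith
      have hwF : w ∈ F := by rw [hFdef]; exact hfw
      have hdw : dist y w = (1 - s) * ‖y - p‖ := by
        have : y - w = (1 - s) • (y - p) := by
          rw [hw]; module
        rw [dist_eq_norm, this, norm_smul, Real.norm_of_nonneg (by linarith)]
      have hpos : 0 < ‖y - p‖ := by
        rw [norm_pos_iff]; exact sub_ne_zero.mpr hyp_ne
      have hlt : dist y w < dist y p := by
        rw [hdw, dist_eq_norm]
        nlinarith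
      exact absurd (hp.2 w hwF) (not_le.mpr hlt)
    -- main estimate
    obtain ⟨t, ht0, hty⟩ := hcollinear
    have hkey := hc y
    rw [hfp, zero_add, hty] at hkey
    have hinner : ⟪c, t • c⟫ = t * ‖c‖ ^ 2 := by
      rw [real_inner_smul_right, real_inner_self_eq_norm_sq]
    have hnorm : ‖y - p‖ = t * ‖c‖ := by
      rw [hty, norm_smul, Real.norm_of_nonneg ht0]
    have hle : t * ‖c‖ ^ 2 ≤ ε := by
      rw [hinner] at hkey; linarith
    rw [hnorm, le_div_iff₀ hG₀]
    calc t * ‖c‖ * G₀ ≤ t * ‖c‖ * ‖c‖ := by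
          apply mul_le_mul_of_nonneg_left hcnorm (by positivity)
      _ = t * ‖c‖ ^ 2 := by ring
      _ ≤ ε := hle
end

section
/- Let C ⊆ ℝⁿ be a nonempty closed convex set, f : ℝⁿ → ℝ convex and differentiable at z with ∇f(z) ≠ 0, and set the Polyak stepsize η = f(z)/‖∇f(z)‖² (assuming f(z) > 0). If z⁺ = proj_C(z − η∇f(z)), then for every x ∈ C with f(x) ≤ 0, f(z)²/‖∇f(z)‖² ≤ ‖x − z‖² − ‖x − z⁺‖². -/
/-!
The projection `z⁺` of `u = z - η ∇f(z)` onto `C` is at least as close to every `x ∈ C` as `u` is.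
Expanding `‖x - u‖²` and bounding the cross term by the gradient inequality
`⟪∇f(z), x - z⟫ ≤ f x - f z ≤ -f z` turns the Polyak choice of `η` into a decrease of
`f(z)² / ‖∇f(z)‖²` in the squared distance to `x`.
-/

open scoped RealInnerProductSpace

open AffineMap in
theorem ConvexOn.le_sub_of_hasFDerivAt {E : Type*} [NormedAddCommGroup E] [NormedSpace ℝ E]
    {s : Set E} {f : E → ℝ} {f' : E →L[ℝ] ℝ} {x z : E} (hf : ConvexOn ℝ s f)
    (hz : z ∈ s) (hx : x ∈ s) (hf' : HasFDerivAt f f' z) :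
    f' (x - z) ≤ f x - f z := by
  set ℓ : ℝ →ᵃ[ℝ] E := lineMap z x
  have hline : ConvexOn ℝ (ℓ ⁻¹' s) (f ∘ ℓ) := hf.comp_affineMap ℓ
  have hderiv : HasDerivAt (f ∘ ℓ) (f' (x - z)) 0 := by
    simpa using hf'.comp_hasDerivAt_of_eq 0 hasDerivAt_lineMap (lineMap_apply_zero z x).symm
  simpa [ℓ, slope_def_field] using
    hline.le_slope_of_hasDerivAt (by simpa [ℓ] using hz) (by simpa [ℓ] using hx) one_pos hderiv

theorem ConvexOn.inner_le_sub_of_hasGradientAt {E : Type*} [NormedAddCommGroup E]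
    [InnerProductSpace ℝ E] [CompleteSpace E] {s : Set E} {f : E → ℝ} {g x z : E}
    (hf : ConvexOn ℝ s f) (hz : z ∈ s) (hx : x ∈ s) (hg : HasGradientAt f g z) :
    ⟪g, x - z⟫ ≤ f x - f z := by
  simpa using hf.le_sub_of_hasFDerivAt hz hx (hasGradientAt_iff_hasFDerivAt.mp hg)

section Projection

variable {F : Type*} [NormedAddCommGroup F] [InnerProductSpace ℝ F] {K : Set F} {u v : F}

theorem real_inner_le_zero_of_forall_dist_le (hK : Convex ℝ K) (hv : v ∈ K)
    (hmin : ∀ w ∈ K, dist u v ≤ dist u w) : ∀ w ∈ K, ⟪u - v, w - v⟫ ≤ 0 := by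
  have : Nonempty K := ⟨⟨v, hv⟩⟩
  refine (norm_eq_iInf_iff_real_inner_le_zero hK hv).mp (le_antisymm ?_ ?_)
  · exact le_ciInf fun w ↦ by simpa only [dist_eq_norm] using hmin w w.2
  · exact ciInf_le ⟨0, by rintro _ ⟨w, rfl⟩; positivity⟩ (⟨v, hv⟩ : K)

theorem norm_sub_sq_add_norm_sub_sq_le_of_real_inner_le_zero {w : F}
    (h : ⟪u - v, w - v⟫ ≤ 0) : ‖w - v‖ ^ 2 + ‖u - v‖ ^ 2 ≤ ‖w - u‖ ^ 2 := by
  have hexpand := norm_sub_sq_real (w - v) (u - v)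
  rw [sub_sub_sub_cancel_right, real_inner_comm] at hexpand
  linarith

end Projection

theorem norm_sub_polyak_step_sq_le {E : Type*} [NormedAddCommGroup E] [InnerProductSpace ℝ E]
    {g x z : E} {c : ℝ} (hc : 0 ≤ c) (hgx : ⟪g, x - z⟫ ≤ -c) :
    ‖x - (z - (c / ‖g‖ ^ 2) • g)‖ ^ 2 ≤ ‖x - z‖ ^ 2 - c ^ 2 / ‖g‖ ^ 2 := by
  set η := c / ‖g‖ ^ 2
  have hη : 0 ≤ η := by positivity
  -- holds also for `g = 0`, where both sides vanish
  have hηg : η ^ 2 * ‖g‖ ^ 2 = c ^ 2 / ‖g‖ ^ 2 := by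
    rcases eq_or_ne g 0 with rfl | hg
    · simp
    · simp only [η]
      field_simp
  have hexpand : ‖x - (z - η • g)‖ ^ 2 = ‖x - z‖ ^ 2 + 2 * η * ⟪x - z, g⟫ + η ^ 2 * ‖g‖ ^ 2 := by
    rw [sub_sub_eq_add_sub, add_sub_right_comm, norm_add_sq_real, real_inner_smul_right,
      norm_smul, mul_pow, Real.norm_eq_abs, sq_abs]
    ring
  have hcross : η * ⟪x - z, g⟫ ≤ -(c ^ 2 / ‖g‖ ^ 2) := by
    calc η * ⟪x - z, g⟫ ≤ η * -c := by rw [real_inner_comm]; gcongr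
      _ = -(c ^ 2 / ‖g‖ ^ 2) := by ring
  linarith

theorem polyak_step_contraction_general
    {n : ℕ} (C : Set (EuclideanSpace ℝ (Fin n)))
    (hCcv : Convex ℝ C)
    (f : EuclideanSpace ℝ (Fin n) → ℝ) (hf : ConvexOn ℝ Set.univ f)
    (z g zp : EuclideanSpace ℝ (Fin n)) (hg : HasGradientAt f g z)
    (hfz : 0 < f z)
    (η : ℝ) (hη : η = f z / ‖g‖ ^ 2)
    (hzp : zp ∈ C ∧ ∀ w ∈ C, dist (z - η • g) zp ≤ dist (z - η • g) w) :
    ∀ x ∈ C, f x ≤ 0 →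
      f z ^ 2 / ‖g‖ ^ 2 ≤ ‖x - z‖ ^ 2 - ‖x - zp‖ ^ 2 := by
  intro x hx hfx
  have hgrad : ⟪g, x - z⟫ ≤ -f z := by
    linarith [hf.inner_le_sub_of_hasGradientAt (Set.mem_univ z) (Set.mem_univ x) hg]
  have hproj : ‖x - zp‖ ^ 2 ≤ ‖x - (z - η • g)‖ ^ 2 := by
    have := norm_sub_sq_add_norm_sub_sq_le_of_real_inner_le_zero
      (real_inner_le_zero_of_forall_dist_le hCcv hzp.1 hzp.2 x hx)
    linarith [sq_nonneg ‖z - η • g - zp‖]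
  have hstep := norm_sub_polyak_step_sq_le hfz.le hgrad
  rw [← hη] at hstep
  linarith

/-- Per-step contraction inequality for a projected gradient step with the
Polyak stepsize on a convex constraint function. -/
theorem polyak_step_contraction
    {n : ℕ} (C : Set (EuclideanSpace ℝ (Fin n)))
    (hCne : C.Nonempty) (hCcl : IsClosed C) (hCcv : Convex ℝ C)
    (f : EuclideanSpace ℝ (Fin n) → ℝ) (hf : ConvexOn ℝ Set.univ f)
    (z g zp : EuclideanSpace ℝ (Fin n)) (hg : HasGradientAt f g z)
    (hgne : g ≠ 0) (hfz : 0 < f z)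
    (η : ℝ) (hη : η = f z / ‖g‖ ^ 2)
    (hzp : zp ∈ C ∧ ∀ w ∈ C, dist (z - η • g) zp ≤ dist (z - η • g) w) :
    ∀ x ∈ C, f x ≤ 0 →
      f z ^ 2 / ‖g‖ ^ 2 ≤ ‖x - z‖ ^ 2 - ‖x - zp‖ ^ 2 :=
  polyak_step_contraction_general C hCcv f hf z g zp hg hfz η hη hzp
end

section
/- Let D > 0, K ≥ 2, S = {⌊K/2⌋, …, K}, α_k = D/√k and ε_k = 1/√k. Then (Σ_{k∈S} α_k ε_{k+1})/(Σ_{k∈S} α_k) ≤ (2 ln 2)/((2 − √2)·√K). -/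
open Finset

/-- The weighted average of feasibility tolerances decays like `O(1/√K)`. -/
theorem weighted_tolerance_average_bound
    (D : ℝ) (hD : 0 < D) (K : ℕ) (hK : 2 ≤ K)
    (α ε : ℕ → ℝ)
    (hα : ∀ k, α k = D / Real.sqrt k)
    (hε : ∀ k, ε k = 1 / Real.sqrt k) :
    (∑ k ∈ Finset.Icc (K / 2) K, α k * ε (k + 1)) /
        (∑ k ∈ Finset.Icc (K / 2) K, α k)
      ≤ 2 * Real.log 2 / ((2 - Real.sqrt 2) * Real.sqrt K) := by
  set m := K / 2 with hm
  have hm1 : 1 ≤ m := by omega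
  have hmK : m ≤ K := Nat.div_le_self K 2
  have hKpos : (0:ℝ) < K := by positivity
  have hsK : (0:ℝ) < Real.sqrt K := Real.sqrt_pos.mpr hKpos
  have hsm : (0:ℝ) < Real.sqrt (m + 1 : ℕ) := Real.sqrt_pos.mpr (by positivity)
  -- denominator positive
  have hden : 0 < ∑ k ∈ Finset.Icc m K, α k := by
    apply Finset.sum_pos
    · intro k hk
      rw [hα]
      have hk1 : 1 ≤ k := le_trans hm1 (Finset.mem_Icc.mp hk).1
      have : (0:ℝ) < Real.sqrt k := Real.sqrt_pos.mpr (by exact_mod_cast hk1)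
      positivity
    · exact ⟨m, Finset.mem_Icc.mpr ⟨le_refl m, hmK⟩⟩
  set c : ℝ := 1 / Real.sqrt (m + 1 : ℕ) with hc
  -- numerator bound
  have hnum : (∑ k ∈ Finset.Icc m K, α k * ε (k + 1)) ≤ (∑ k ∈ Finset.Icc m K, α k) * c := by
    rw [Finset.sum_mul]
    apply Finset.sum_le_sum
    intro k hk
    have hk1 : m ≤ k := (Finset.mem_Icc.mp hk).1
    have hαpos : 0 ≤ α k := by
      rw [hα]; positivity
    have hεle : ε (k + 1) ≤ c := by
      rw [hε, hc]
      apply one_div_le_one_div_of_le hsm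
      apply Real.sqrt_le_sqrt
      exact_mod_cast Nat.succ_le_succ hk1
    exact mul_le_mul_of_nonneg_left hεle hαpos
  -- c ≤ RHS
  have hs2 : Real.sqrt 2 < 2 := by
    nlinarith [Real.sq_sqrt (show (0:ℝ) ≤ 2 by norm_num), Real.sqrt_nonneg 2]
  have h2pos : (0:ℝ) < 2 - Real.sqrt 2 := by linarith
  have hlog : (0.6931471803:ℝ) < Real.log 2 := Real.log_two_gt_d9
  have hs2le : Real.sqrt 2 ≤ 1.5 := by
    nlinarith [Real.sq_sqrt (show (0:ℝ) ≤ 2 by norm_num), Real.sqrt_nonneg 2]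
  have hKle : Real.sqrt K ≤ Real.sqrt 2 * Real.sqrt (m + 1 : ℕ) := by
    rw [← Real.sqrt_mul (by norm_num)]
    apply Real.sqrt_le_sqrt
    have : (K : ℕ) ≤ 2 * (m + 1) := by omega
    push_cast
    exact_mod_cast this
  have hcRHS : c ≤ 2 * Real.log 2 / ((2 - Real.sqrt 2) * Real.sqrt K) := by
    rw [hc, div_le_div_iff₀ hsm (by positivity)]
    have h1 : (2 - Real.sqrt 2) * Real.sqrt K ≤ (2 - Real.sqrt 2) * (Real.sqrt 2 * Real.sqrt (m + 1 : ℕ)) :=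
      mul_le_mul_of_nonneg_left hKle (le_of_lt h2pos)
    have h2 : (2 - Real.sqrt 2) * Real.sqrt 2 ≤ 2 * Real.log 2 := by
      have hsq : Real.sqrt 2 * Real.sqrt 2 = 2 := Real.mul_self_sqrt (by norm_num)
      nlinarith
    nlinarith [hsm.le]
  rw [div_le_iff₀ hden]
  calc ∑ k ∈ Finset.Icc m K, α k * ε (k + 1)
      ≤ (∑ k ∈ Finset.Icc m K, α k) * c := hnum
    _ ≤ (∑ k ∈ Finset.Icc m K, α k) * (2 * Real.log 2 / ((2 - Real.sqrt 2) * Real.sqrt K)) :=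
        mul_le_mul_of_nonneg_left hcRHS hden.le
    _ = 2 * Real.log 2 / ((2 - Real.sqrt 2) * Real.sqrt K) * ∑ k ∈ Finset.Icc m K, α k := by ring
end
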